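/- arXiv:1109.1146 — 6 statements merged into one kernel-verified Lean document; each statement's English description precedes it below -/
import Mathlib

section
/- Let X, Y ⊆ V with X ∩ Y = ∅ and X ↛ Y under c. Let Δ > 0 and let v₀, …, v_l be pairwise distinct vertices with c(v_{i−1}, v_i) ≥ Δ for all i ∈ {1, …, l}. Let c' be obtained from c by setting c'(v_{i−1}, v_i) = c(v_{i−1}, v_i) − Δ and c'(v_i, v_{i−1}) = c(v_i, v_{i−1}) + Δ for i = 1, …, l, and c' = c on all other pairs (augmentation of Δ units along the path). If v₀ ∈ X or v_l ∈ Y, then X ↛ Y under c'. -/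
variable {V : Type*}

/-- `w` is reachable from `v` under capacity `c`: there is a (possibly empty)
sequence of edges with strictly positive capacity from `v` to `w`. -/
def Reach (c : V → V → ℕ) : V → V → Prop :=
  Relation.ReflTransGen fun a b => 0 < c a b

/-- `X → Y`: some `y ∈ Y` is reachable from some `x ∈ X`. -/
def ReachSet (c : V → V → ℕ) (X Y : Set V) : Prop :=
  ∃ x ∈ X, ∃ y ∈ Y, Reach c x y

/-!
Off the path `c' = c`, and forward path edges stay positive under `c`, so the only edges that
become positive are reversed path edges `v (i + 1) → v i`. If `v 0 ∈ X`, the head of each such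
edge is already reachable from `X` under `c` along the path, so the set of vertices reachable
from `X` does not grow; if `v l ∈ Y`, symmetrically, the tail of each such edge already reaches
`Y`, so the set of vertices reaching `Y` does not grow.
-/

open Function Relation

theorem Relation.reflTransGen_of_fin_chain {r : V → V → Prop} {n : ℕ} {v : Fin (n + 1) → V}
    (hv : ∀ i : Fin n, r (v i.castSucc) (v i.succ)) {i j : Fin (n + 1)} (hij : i ≤ j) :
    ReflTransGen r (v i) (v j) := by
  refine ReflTransGen.lift v (fun _ _ hab => hab) _ _ <|
    reflTransGen_of_succ_of_le (fun a b => r (v a) (v b)) (fun k hk => ?_) hij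
  obtain ⟨k, rfl⟩ := Fin.eq_castSucc_of_ne_last (hk.2.trans_le (Fin.le_last j)).ne
  simpa only [Fin.orderSucc_castSucc] using hv k

theorem reach_swap {c : V → V → ℕ} {a b : V} : Reach (swap c) a b ↔ Reach c b a :=
  reflTransGen_swap

theorem reachSet_swap {c : V → V → ℕ} {X Y : Set V} : ReachSet (swap c) Y X ↔ ReachSet c X Y := by
  simp only [ReachSet, reach_swap]
  constructor
  · rintro ⟨y, hy, x, hx, h⟩
    exact ⟨x, hx, y, hy, h⟩
  · rintro ⟨x, hx, y, hy, h⟩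
    exact ⟨y, hy, x, hx, h⟩

theorem reachSet_singleton_of_reach_of_forall_pos {c c' : V → V → ℕ} {X : Set V}
    (hc' : ∀ a b, 0 < c' a b → 0 < c a b ∨ ReachSet c X {b}) {x y : V} (hx : x ∈ X)
    (h : Reach c' x y) : ReachSet c X {y} := by
  induction h with
  | refl => exact ⟨x, hx, x, rfl, .refl⟩
  | tail _ hab ih =>
    rcases hc' _ _ hab with hpos | hb
    · obtain ⟨x', hx', _, rfl, h'⟩ := ih
      exact ⟨x', hx', _, rfl, h'.tail hpos⟩
    · exact hb

theorem not_reachSet_of_forall_pos_imp_reachSet_from {c c' : V → V → ℕ} {X Y : Set V}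
    (hreach : ¬ ReachSet c X Y) (hc' : ∀ a b, 0 < c' a b → 0 < c a b ∨ ReachSet c X {b}) :
    ¬ ReachSet c' X Y := by
  rintro ⟨x, hx, y, hy, h⟩
  obtain ⟨x', hx', _, rfl, h'⟩ := reachSet_singleton_of_reach_of_forall_pos hc' hx h
  exact hreach ⟨x', hx', _, hy, h'⟩

theorem not_reachSet_of_forall_pos_imp_reachSet_to {c c' : V → V → ℕ} {X Y : Set V}
    (hreach : ¬ ReachSet c X Y) (hc' : ∀ a b, 0 < c' a b → 0 < c a b ∨ ReachSet c {a} Y) :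
    ¬ ReachSet c' X Y := by
  rw [← reachSet_swap] at hreach ⊢
  exact not_reachSet_of_forall_pos_imp_reachSet_from hreach fun a b hab =>
    (hc' b a hab).imp_right reachSet_swap.mpr

theorem pos_or_eq_reverse_of_pos_of_eq_off_path {c c' : V → V → ℕ} {l : ℕ}
    {v : Fin (l + 1) → V} (hpath : ∀ i : Fin l, 0 < c (v i.castSucc) (v i.succ))
    (hother : ∀ a b : V,
      (∀ i : Fin l,
        ¬((a = v i.castSucc ∧ b = v i.succ) ∨ (a = v i.succ ∧ b = v i.castSucc))) →
      c' a b = c a b)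
    {a b : V} (hab : 0 < c' a b) :
    0 < c a b ∨ ∃ i : Fin l, a = v i.succ ∧ b = v i.castSucc := by
  by_cases hoff : ∀ i : Fin l,
      ¬((a = v i.castSucc ∧ b = v i.succ) ∨ (a = v i.succ ∧ b = v i.castSucc))
  · exact .inl (hother a b hoff ▸ hab)
  · push Not at hoff
    obtain ⟨i, ⟨rfl, rfl⟩ | hrev⟩ := hoff
    · exact .inl (hpath i)
    · exact .inr ⟨i, hrev⟩

theorem stmt2_general (c c' : V → V → ℕ) (X Y : Set V)
    (hreach : ¬ ReachSet c X Y)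
    (Δ : ℕ) (hΔ : 0 < Δ) (l : ℕ) (v : Fin (l + 1) → V)
    (hcapΔ : ∀ i : Fin l, Δ ≤ c (v i.castSucc) (v i.succ))
    (hother : ∀ a b : V,
      (∀ i : Fin l,
        ¬((a = v i.castSucc ∧ b = v i.succ) ∨ (a = v i.succ ∧ b = v i.castSucc))) →
      c' a b = c a b)
    (hends : v 0 ∈ X ∨ v (Fin.last l) ∈ Y) :
    ¬ ReachSet c' X Y := by
  have hpath : ∀ i : Fin l, 0 < c (v i.castSucc) (v i.succ) := fun i => hΔ.trans_le (hcapΔ i)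
  have hnew : ∀ a b, 0 < c' a b → 0 < c a b ∨ ∃ i : Fin l, a = v i.succ ∧ b = v i.castSucc :=
    fun _ _ => pos_or_eq_reverse_of_pos_of_eq_off_path hpath hother
  rcases hends with hstart | hend
  · refine not_reachSet_of_forall_pos_imp_reachSet_from hreach fun a b hab => ?_
    refine (hnew a b hab).imp_right ?_
    rintro ⟨i, -, rfl⟩
    exact ⟨v 0, hstart, _, rfl, reflTransGen_of_fin_chain hpath (Fin.zero_le _)⟩
  · refine not_reachSet_of_forall_pos_imp_reachSet_to hreach fun a b hab => ?_
    refine (hnew a b hab).imp_right ?_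
    rintro ⟨i, rfl, -⟩
    exact ⟨_, rfl, v (Fin.last l), hend, reflTransGen_of_fin_chain hpath (Fin.le_last _)⟩

/-- Augmenting `Δ` units along a path of pairwise distinct vertices which starts
in `X` or ends in `Y` preserves `X ↛ Y`. -/
theorem stmt2 (c c' : V → V → ℕ) (X Y : Set V)
    (hXY : X ∩ Y = ∅) (hreach : ¬ ReachSet c X Y)
    (Δ : ℕ) (hΔ : 0 < Δ) (l : ℕ) (v : Fin (l + 1) → V)
    (hinj : Function.Injective v)
    (hcapΔ : ∀ i : Fin l, Δ ≤ c (v i.castSucc) (v i.succ))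
    (hfwd : ∀ i : Fin l, c' (v i.castSucc) (v i.succ) = c (v i.castSucc) (v i.succ) - Δ)
    (hbwd : ∀ i : Fin l, c' (v i.succ) (v i.castSucc) = c (v i.succ) (v i.castSucc) + Δ)
    (hother : ∀ a b : V,
      (∀ i : Fin l,
        ¬((a = v i.castSucc ∧ b = v i.succ) ∨ (a = v i.succ ∧ b = v i.castSucc))) →
      c' a b = c a b)
    (hends : v 0 ∈ X ∨ v (Fin.last l) ∈ Y) :
    ¬ ReachSet c' X Y :=
  stmt2_general c c' X Y hreach Δ hΔ l v hcapΔ hother hends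
end

section
/- Let V = R ⊎ B ⊎ {t} and let d : V → ℕ be region-valid for c. Assume moreover that ¬(w → T_{d(w)}) under c for every w ∈ B. Then for every u ∈ R with d(u) ≥ 1, one has ¬(u → T_{d(u)−1}) under c. -/
variable {V : Type*}

/-- `u → S`: some vertex of `S` is reachable from `u`. -/
def ReachTo (c : V → V → ℕ) (u : V) (S : Set V) : Prop :=
  ∃ y ∈ S, Reach c u y

/-- `T_a = {t} ∪ {w ∈ B | d w < a}`. -/
def Tset (B : Set V) (t : V) (d : V → ℕ) (a : ℕ) : Set V :=
  insert t {w ∈ B | d w < a}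

/-- A labeling `d` is region-valid for `c` if `d t = 0` and, for every edge with
positive capacity, `d u ≤ d v` if both endpoints are in `R ∪ {t}`, and
`d u ≤ d v + 1` if one of the endpoints lies in `B`. -/
def RegionValid (c : V → V → ℕ) (R B : Set V) (t : V) (d : V → ℕ) : Prop :=
  d t = 0 ∧ ∀ u v : V, 0 < c u v →
    ((u ∈ R ∪ {t} ∧ v ∈ R ∪ {t}) → d u ≤ d v) ∧ ((u ∈ B ∨ v ∈ B) → d u ≤ d v + 1)

/-- If `d` is region-valid and no boundary vertex `w` can reach `T_{d w}`, then no
region vertex `u` with `d u ≥ 1` can reach `T_{d u - 1}`. -/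
theorem stmt4 (c : V → V → ℕ) (R B : Set V) (t : V)
    (hRB : R ∩ B = ∅) (htR : t ∉ R) (htB : t ∉ B)
    (hcover : ∀ v : V, v ∈ R ∨ v ∈ B ∨ v = t)
    (d : V → ℕ) (hvalid : RegionValid c R B t d)
    (hB : ∀ w ∈ B, ¬ ReachTo c w (Tset B t d (d w))) :
    ∀ u ∈ R, 1 ≤ d u → ¬ ReachTo c u (Tset B t d (d u - 1)) := by
  obtain ⟨ht0, hedge⟩ := hvalid
  -- key lemma by induction on the path
  have key : ∀ x y : V, Reach c x y → ∀ a : ℕ, 1 ≤ a → a ≤ d x →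
      x ∈ R ∪ {t} → y ∈ Tset B t d (a - 1) → False := by
    intro x y hreach
    induction hreach using Relation.ReflTransGen.head_induction_on with
    | refl =>
      intro a ha hax hx hy
      rcases hy with rfl | ⟨hyB, _⟩
      · omega
      · rcases hx with hx | hx
        · exact absurd (Set.mem_inter hx hyB) (by simp [hRB])
        · simp only [Set.mem_singleton_iff] at hx
          subst hx; exact htB hyB
    | head hxz hzy ih =>
      rename_i x z
      intro a ha hax hx hy
      rcases hcover z with hz | hz | hz
      · exact ih a ha (le_trans hax ((hedge x z hxz).1 ⟨hx, Or.inl hz⟩)) (Or.inl hz) hy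
      · -- z ∈ B : contradiction with hB
        have hdz : a - 1 ≤ d z := by
          have := (hedge x z hxz).2 (Or.inr hz)
          omega
        apply hB z hz
        refine ⟨y, ?_, hzy⟩
        rcases hy with rfl | ⟨hyB, hylt⟩
        · exact Set.mem_insert _ _
        · exact Set.mem_insert_iff.2 (Or.inr ⟨hyB, by omega⟩)
      · subst hz
        have h1 : d x ≤ d z := (hedge x z hxz).1 ⟨hx, Or.inr rfl⟩
        exact ih a ha (by omega) (Or.inr rfl) hy
  intro u hu hdu ⟨y, hy, hreach⟩
  exact key u y hreach (d u) hdu le_rfl (Or.inl hu) hy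
end

section
/- Let f : V × V → ℤ be antisymmetric (f(u,v) = −f(v,u) for all u, v) and e : V → ℕ. Define the residual excess e_f(w) = e(w) + Σ_{u∈V} f(u,w), and assume e_f(w) ≥ 0 for every w ∈ V. If e_f(v) > 0 for some v ∈ V, then there exists a sequence v₀, v₁, …, v_l = v (l ≥ 0) with e(v₀) > 0 and f(v_{i−1}, v_i) > 0 for all i ∈ {1, …, l}; that is, every vertex carrying residual excess is reachable from a vertex with original excess along edges carrying strictly positive flow. -/
variable {V : Type*}

/-- Every vertex carrying residual excess (w.r.t. an antisymmetric flow `f` with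
nonnegative residual excesses everywhere) is reachable from a vertex with positive
original excess along edges carrying strictly positive flow. -/
theorem stmt9 [Fintype V] (f : V → V → ℤ) (hanti : ∀ u v : V, f u v = -f v u)
    (e : V → ℕ)
    (hnonneg : ∀ w : V, 0 ≤ (e w : ℤ) + ∑ u : V, f u w)
    (v : V) (hv : 0 < (e v : ℤ) + ∑ u : V, f u v) :
    ∃ v₀ : V, 0 < e v₀ ∧ Relation.ReflTransGen (fun a b => 0 < f a b) v₀ v := by
  classical
  by_contra h
  push_neg at h
  set R := fun a b : V => 0 < f a b with hR
  set S : Finset V := Finset.univ.filter (fun u => Relation.ReflTransGen R u v) with hS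
  have hvS : v ∈ S := by simp only [hS, Finset.mem_filter, Finset.mem_univ, true_and]; exact Relation.ReflTransGen.refl
  have he0 : ∀ w ∈ S, (e w : ℤ) = 0 := by
    intro w hw
    simp only [hS, Finset.mem_filter, Finset.mem_univ, true_and] at hw
    by_contra hne
    have : 0 < e w := Nat.pos_of_ne_zero (by exact_mod_cast fun h0 => hne (by simp [h0]))
    exact absurd hw (h w this)
  have hcross : ∀ w ∈ S, ∀ u ∈ Sᶜ, f u w ≤ 0 := by
    intro w hw u hu
    by_contra hpos
    push_neg at hpos
    rw [Finset.mem_compl] at hu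
    apply hu
    simp only [hS, Finset.mem_filter, Finset.mem_univ, true_and] at hw ⊢
    exact Relation.ReflTransGen.head hpos hw
  have hpos : 0 < ∑ w ∈ S, ((e w : ℤ) + ∑ u : V, f u w) :=
    Finset.sum_pos' (fun w _ => hnonneg w) ⟨v, hvS, hv⟩
  have hinner : ∑ w ∈ S, ∑ u ∈ S, f u w = 0 := by
    have h1 : ∑ w ∈ S, ∑ u ∈ S, f u w = -∑ w ∈ S, ∑ u ∈ S, f u w := by
      calc ∑ w ∈ S, ∑ u ∈ S, f u w = ∑ u ∈ S, ∑ w ∈ S, f u w := Finset.sum_comm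
        _ = ∑ u ∈ S, ∑ w ∈ S, -f w u := by simp_rw [← hanti]
        _ = -∑ u ∈ S, ∑ w ∈ S, f w u := by simp [Finset.sum_neg_distrib]
    linarith
  have hcr : ∑ w ∈ S, ∑ u ∈ Sᶜ, f u w ≤ 0 :=
    Finset.sum_nonpos fun w hw => Finset.sum_nonpos fun u hu => hcross w hw u hu
  have hsplit : ∑ w ∈ S, ((e w : ℤ) + ∑ u : V, f u w)
      = ∑ w ∈ S, (e w : ℤ) + (∑ w ∈ S, ∑ u ∈ S, f u w + ∑ w ∈ S, ∑ u ∈ Sᶜ, f u w) := by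
    rw [Finset.sum_add_distrib]
    congr 1
    rw [← Finset.sum_add_distrib]
    exact Finset.sum_congr rfl fun w _ => (Finset.sum_add_sum_compl S _).symm
  have he0' : ∑ w ∈ S, (e w : ℤ) = 0 := Finset.sum_eq_zero he0
  rw [hsplit, he0', hinner] at hpos
  linarith
end

section
/- Let t ∈ V, R ⊆ V \ {t}, and let B = {w ∈ V \ (R ∪ {t}) : c(u,w) > 0 or c(w,u) > 0 for some u ∈ R} be the region boundary. Define the region capacity c^R by c^R(u,v) = c(u,v) if u, v ∈ R ∪ {t} or (u ∈ R and v ∈ B), and c^R(u,v) = 0 otherwise. If v ∈ R satisfies v ↛ ({t} ∪ B) under c^R (v cannot reach the sink nor the region boundary inside the region network), then v ↛ t under c (v cannot reach the sink in the whole network). -/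
open Classical

variable {V : Type*}

/-- The region boundary: vertices outside `R ∪ {t}` joined to `R` by an edge of
positive capacity (in either direction). -/
def regionBoundary (c : V → V → ℕ) (R : Set V) (t : V) : Set V :=
  {w | w ∉ R ∧ w ≠ t ∧ ∃ u ∈ R, 0 < c u w ∨ 0 < c w u}

/-- The region capacity: `c u v` if `u, v ∈ R ∪ {t}` or (`u ∈ R` and `v` is a
boundary vertex), and `0` otherwise. -/
noncomputable def regionCap (c : V → V → ℕ) (R : Set V) (t : V) (u v : V) : ℕ :=
  if (u ∈ R ∪ {t} ∧ v ∈ R ∪ {t}) ∨ (u ∈ R ∧ v ∈ regionBoundary c R t) then c u v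
  else 0

/-- If a region vertex can reach neither the sink nor the region boundary inside
the region network, then it cannot reach the sink in the whole network. -/
theorem stmt13 (c : V → V → ℕ) (t : V) (R : Set V) (htR : t ∉ R)
    (v : V) (hv : v ∈ R)
    (h : ¬ ReachTo (regionCap c R t) v ({t} ∪ regionBoundary c R t)) :
    ¬ Reach c v t := by
  intro hreach
  have key : ∀ w, Reach c v w → w ∈ R ∧ Reach (regionCap c R t) v w := by
    intro w hw
    induction hw with
    | refl => exact ⟨hv, Relation.ReflTransGen.refl⟩
    | tail hab hedge ih =>
      rename_i b a
      obtain ⟨hbR, hvb⟩ := ih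
      by_cases haR : a ∈ R
      · refine ⟨haR, hvb.tail ?_⟩
        have : regionCap c R t b a = c b a := by
          simp [regionCap, Set.mem_union, hbR, haR]
        simpa [this] using hedge
      · by_cases hat : a = t
        · exfalso; apply h
          refine ⟨a, Or.inl (by simp [hat]), hvb.tail ?_⟩
          have : regionCap c R t b a = c b a := by
            simp [regionCap, Set.mem_union, hbR, hat]
          simpa [this] using hedge
        · have hbd : a ∈ regionBoundary c R t := ⟨haR, hat, b, hbR, Or.inl hedge⟩
          exfalso; apply h
          refine ⟨a, Or.inr hbd, hvb.tail ?_⟩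
          have : regionCap c R t b a = c b a := by
            simp [regionCap, hbR, hbd]
          simpa [this] using hedge
  exact htR (key t hreach).1
end

section
/- Let f : V × V → ℤ be antisymmetric (f(u,v) = −f(v,u) for all u, v). Define the residual capacity c_f = c − f (with values in ℤ), the residual excess e_f(v) = e(v) + Σ_{u∈V} f(u,v) for v ≠ t and e_f(t) = 0, and the flow value |f| = Σ_{u∈V} f(u,t). Then for every C ⊆ V with s ∈ C and t ∉ C: Σ_{u∈C, v∉C} (c(u,v) − f(u,v)) + Σ_{v∉C} e_f(v) = (Σ_{u∈C, v∉C} c(u,v) + Σ_{v∉C} e(v)) − |f|. In other words, the cost of every s–t cut in the residual network differs from its cost in the original network by the same constant |f|. -/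
variable {V : Type*}

/-- The cost of every s–t cut in the residual network differs from its cost in the
original network by the flow value `|f| = Σ_u f(u,t)`. -/
theorem stmt14 [Fintype V] [DecidableEq V] (c : V → V → ℕ) (e : V → ℕ)
    (s t : V) (hst : s ≠ t) (het : e t = 0)
    (f : V → V → ℤ) (hanti : ∀ u v : V, f u v = -f v u)
    (ef : V → ℤ) (hef : ∀ v : V, v ≠ t → ef v = (e v : ℤ) + ∑ u : V, f u v)
    (heft : ef t = 0)
    (C : Finset V) (hsC : s ∈ C) (htC : t ∉ C) :
    (∑ u ∈ C, ∑ v ∈ Cᶜ, ((c u v : ℤ) - f u v)) + ∑ v ∈ Cᶜ, ef v =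
      ((∑ u ∈ C, ∑ v ∈ Cᶜ, (c u v : ℤ)) + ∑ v ∈ Cᶜ, (e v : ℤ)) - ∑ u : V, f u t := by
  have ht : t ∈ Cᶜ := Finset.mem_compl.mpr htC
  have hsplit : ∑ v ∈ Cᶜ, ef v
      = (∑ v ∈ Cᶜ, ((e v : ℤ) + ∑ u : V, f u v)) - ∑ u : V, f u t := by
    rw [← Finset.add_sum_erase _ ef ht, ← Finset.add_sum_erase _ _ ht, heft]
    rw [Finset.sum_congr rfl (fun v hv => hef v (Finset.ne_of_mem_erase hv))]
    push_cast [het]; ring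
  have key : ∑ v ∈ Cᶜ, ∑ u : V, f u v = ∑ u ∈ C, ∑ v ∈ Cᶜ, f u v := by
    have h1 : ∀ v : V, ∑ u : V, f u v = ∑ u ∈ C, f u v + ∑ u ∈ Cᶜ, f u v := fun v =>
      (Finset.sum_add_sum_compl C _).symm
    simp_rw [h1, Finset.sum_add_distrib]
    have h0 : ∑ v ∈ Cᶜ, ∑ u ∈ Cᶜ, f u v = 0 := by
      have h2 : (∑ v ∈ Cᶜ, ∑ u ∈ Cᶜ, f u v) = -(∑ v ∈ Cᶜ, ∑ u ∈ Cᶜ, f u v) := by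
        calc (∑ v ∈ Cᶜ, ∑ u ∈ Cᶜ, f u v)
            = ∑ v ∈ Cᶜ, ∑ u ∈ Cᶜ, -(f v u) :=
              Finset.sum_congr rfl fun v _ => Finset.sum_congr rfl fun u _ => hanti u v
          _ = -(∑ v ∈ Cᶜ, ∑ u ∈ Cᶜ, f v u) := by simp
          _ = -(∑ v ∈ Cᶜ, ∑ u ∈ Cᶜ, f u v) := by rw [Finset.sum_comm]
      linarith
    rw [h0, Finset.sum_comm]
    ring
  rw [hsplit]
  simp only [Finset.sum_add_distrib, Finset.sum_sub_distrib] at *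
  rw [key]
  ring
end

section
/- Let t ∈ V, let e : V → ℕ be an excess function with e(t) = 0, and let T = {v ∈ V : v → t} under c. If every vertex v with e(v) > 0 satisfies v ↛ t, then c(u,v) = 0 for every u ∉ T and v ∈ T, and e(v) = 0 for every v ∈ T; consequently Σ_{u∉T, v∈T} c(u,v) + Σ_{v∈T} e(v) = 0, i.e., the cut (V \ T, T) has zero cost. -/
variable {V : Type*}

/-- If every vertex carrying excess cannot reach the sink, then the cut
`(V \ T, T)` with `T = {v | v → t}` has zero cost. -/
theorem stmt15 [Fintype V] [DecidableEq V] (c : V → V → ℕ) (t : V) (e : V → ℕ)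
    (het : e t = 0)
    (T : Finset V) (hT : ∀ v : V, v ∈ T ↔ Reach c v t)
    (h : ∀ v : V, 0 < e v → ¬ Reach c v t) :
    (∀ u ∉ T, ∀ v ∈ T, c u v = 0) ∧ (∀ v ∈ T, e v = 0) ∧
      (∑ u ∈ Tᶜ, ∑ v ∈ T, c u v) + ∑ v ∈ T, e v = 0 := by
  have h1 : ∀ u ∉ T, ∀ v ∈ T, c u v = 0 := by
    intro u hu v hv
    by_contra hc
    exact hu ((hT u).2 (Relation.ReflTransGen.head (Nat.pos_of_ne_zero hc) ((hT v).1 hv)))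
  have h2 : ∀ v ∈ T, e v = 0 := by
    intro v hv
    by_contra hc
    exact h v (Nat.pos_of_ne_zero hc) ((hT v).1 hv)
  refine ⟨h1, h2, ?_⟩
  rw [Finset.sum_eq_zero (fun u hu => Finset.sum_eq_zero (fun v hv => h1 u (Finset.mem_compl.1 hu) v hv)), Finset.sum_eq_zero h2]
  rfl
end
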